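/- arXiv:2406.11453 — 2 statements merged into one kernel-verified Lean document; each statement's English description precedes it below -/
import Mathlib

section
/- Let X be a d×d self-adjoint random matrix and let M be a d×d Hermitian matrix of rank r. Then ‖E[(X − E X) M (X − E X)]‖ ≤ σ*(X)² · r · ‖M‖, where ‖·‖ denotes the operator (spectral) norm. -/
open MeasureTheory ProbabilityTheory Matrix
open scoped ComplexOrder

noncomputable section

/-- squared ℓ² norm of a complex vector -/
def nsq {d : ℕ} (v : Fin d → ℂ) : ℝ := ∑ i, ‖v i‖ ^ 2

/-- Rayleigh quotient (real part) ⟨v, M v⟩ of a matrix at a vector -/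
def ray {d : ℕ} (M : Matrix (Fin d) (Fin d) ℂ) (v : Fin d → ℂ) : ℝ :=
  (star v ⬝ᵥ M.mulVec v).re

/-- largest eigenvalue of a Hermitian matrix, characterized as the supremum of the
Rayleigh quotient over ℓ²-unit vectors -/
def lmax {d : ℕ} (M : Matrix (Fin d) (Fin d) ℂ) : ℝ := sSup {x | ∃ v, nsq v = 1 ∧ x = ray M v}

/-- ℓ²→ℓ² operator (spectral) norm of a matrix -/
def opN {d : ℕ} (M : Matrix (Fin d) (Fin d) ℂ) : ℝ :=
  sSup {x | ∃ v, nsq v = 1 ∧ x = Real.sqrt (nsq (M.mulVec v))}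

/-- entrywise expectation of a random matrix -/
def Emat {Ω : Type*} [MeasurableSpace Ω] {d : ℕ} (μ : Measure Ω)
    (X : Ω → Matrix (Fin d) (Fin d) ℂ) : Matrix (Fin d) (Fin d) ℂ :=
  Matrix.of fun i j => ∫ ω, X ω i j ∂μ

/-- the quadratic map M ↦ E[(X - E X) M (X - E X)] -/
def qmap {Ω : Type*} [MeasurableSpace Ω] {d : ℕ} (μ : Measure Ω)
    (X : Ω → Matrix (Fin d) (Fin d) ℂ) (M : Matrix (Fin d) (Fin d) ℂ) :
    Matrix (Fin d) (Fin d) ℂ :=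
  Emat μ fun ω => (X ω - Emat μ X) * M * (X ω - Emat μ X)

/-- σ*(X)² = sup_{‖v‖=‖w‖=1} E |⟨v, (X - E X) w⟩|² -/
def sigmaStarSq {Ω : Type*} [MeasurableSpace Ω] {d : ℕ} (μ : Measure Ω)
    (X : Ω → Matrix (Fin d) (Fin d) ℂ) : ℝ :=
  sSup {x | ∃ v w : Fin d → ℂ, nsq v = 1 ∧ nsq w = 1 ∧
    x = ∫ ω, ‖star v ⬝ᵥ (X ω - Emat μ X).mulVec w‖ ^ 2 ∂μ}

/-- σ*(X) -/
def sigmaStar {Ω : Type*} [MeasurableSpace Ω] {d : ℕ} (μ : Measure Ω)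
    (X : Ω → Matrix (Fin d) (Fin d) ℂ) : ℝ :=
  Real.sqrt (sigmaStarSq μ X)

/-- Lehner's variational quantity
Λ(X) = inf_{M > 0} λ_max(E X + M⁻¹ + E[(X - E X) M (X - E X)]),
the infimum being over positive definite Hermitian matrices M; by Lehner's formula this equals
the upper spectral edge λ_max(X_free) of the associated free operator. -/
def Lehner {Ω : Type*} [MeasurableSpace Ω] {d : ℕ} (μ : Measure Ω)
    (X : Ω → Matrix (Fin d) (Fin d) ℂ) : ℝ :=
  sInf {x | ∃ M : Matrix (Fin d) (Fin d) ℂ, M.PosDef ∧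
    x = lmax (Emat μ X + M⁻¹ + qmap μ X M)}

/-- B(θ) = 2 for θ ≤ 1 and θ + 1/θ for θ > 1 -/
def Bfun (θ : ℝ) : ℝ := if θ ≤ 1 then 2 else θ + θ⁻¹

/-!
Write `Y = X - E X`. For unit vectors `v, w`, self-adjointness of `Y` and the spectral decomposition
`M = ∑ₖ λₖ uₖ uₖᴴ` give `⟨w, E[Y M Y] v⟩ = ∑ₖ λₖ E[conj ⟨uₖ, Y w⟩ ⟨uₖ, Y v⟩]`. By AM-GM each
`E |⟨uₖ, Y w⟩| |⟨uₖ, Y v⟩|` is at most `σ*(X)²`, and `∑ₖ |λₖ| ≤ r ‖M‖` because only `r` eigenvalues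
are nonzero and each is bounded by `‖M‖`.
-/

section OperatorNorm

variable {d : ℕ}

lemma nsq_eq_norm_sq (v : Fin d → ℂ) : nsq v = ‖WithLp.toLp 2 v‖ ^ 2 :=
  (EuclideanSpace.norm_sq_eq _).symm

lemma sqrt_nsq (v : Fin d → ℂ) : √(nsq v) = ‖WithLp.toLp 2 v‖ := by
  rw [nsq_eq_norm_sq, Real.sqrt_sq (norm_nonneg _)]

lemma norm_apply_le_one {v : Fin d → ℂ} (hv : nsq v = 1) (i : Fin d) : ‖v i‖ ≤ 1 := by
  simpa [← sqrt_nsq, hv] using PiLp.norm_apply_le (WithLp.toLp 2 v) i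

lemma star_dotProduct_eq_inner {n 𝕜 : Type*} [Fintype n] [RCLike 𝕜] (v w : n → 𝕜) :
    star v ⬝ᵥ w = inner 𝕜 (WithLp.toLp 2 v) (WithLp.toLp 2 w) := by
  rw [EuclideanSpace.inner_eq_star_dotProduct, dotProduct_comm]

lemma norm_star_dotProduct_mulVec_le (A : Matrix (Fin d) (Fin d) ℂ) {v w : Fin d → ℂ}
    (hv : nsq v = 1) (hw : nsq w = 1) : ‖star v ⬝ᵥ A *ᵥ w‖ ≤ ∑ i, ∑ j, ‖A i j‖ := by
  simp only [dotProduct, mulVec, Finset.mul_sum]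
  refine (norm_sum_le _ _).trans <| Finset.sum_le_sum fun i _ =>
    (norm_sum_le _ _).trans <| Finset.sum_le_sum fun j _ => ?_
  rw [norm_mul, norm_mul, Pi.star_apply, norm_star]
  calc ‖v i‖ * (‖A i j‖ * ‖w j‖) ≤ 1 * (‖A i j‖ * 1) := by
        gcongr
        exacts [norm_apply_le_one hv i, norm_apply_le_one hw j]
    _ = ‖A i j‖ := by ring

lemma opN_nonneg (A : Matrix (Fin d) (Fin d) ℂ) : 0 ≤ opN A :=
  Real.sSup_nonneg fun _ ⟨_, _, hx⟩ => hx ▸ Real.sqrt_nonneg _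

lemma sqrt_nsq_mulVec_le_opN (A : Matrix (Fin d) (Fin d) ℂ) {v : Fin d → ℂ} (hv : nsq v = 1) :
    √(nsq (A *ᵥ v)) ≤ opN A := by
  have hbdd : BddAbove {x | ∃ v, nsq v = 1 ∧ x = √(nsq (A *ᵥ v))} := by
    refine ⟨‖toEuclideanCLM (𝕜 := ℂ) A‖, ?_⟩
    rintro x ⟨v, hv, rfl⟩
    have hv' : ‖WithLp.toLp 2 v‖ = 1 := by rw [← sqrt_nsq, hv, Real.sqrt_one]
    simpa [sqrt_nsq, hv', ← toEuclideanCLM_toLp] using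
      (toEuclideanCLM (𝕜 := ℂ) A).le_opNorm (WithLp.toLp 2 v)
  exact le_csSup hbdd ⟨v, hv, rfl⟩

lemma opN_le_of_forall_norm_star_dotProduct_le {A : Matrix (Fin d) (Fin d) ℂ} {C : ℝ}
    (hC : 0 ≤ C) (h : ∀ v w : Fin d → ℂ, nsq v = 1 → nsq w = 1 → ‖star w ⬝ᵥ A *ᵥ v‖ ≤ C) :
    opN A ≤ C := by
  refine Real.sSup_le ?_ hC
  rintro _ ⟨v, hv, rfl⟩
  rw [sqrt_nsq]
  set x : EuclideanSpace ℂ (Fin d) := WithLp.toLp 2 (A *ᵥ v)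
  rcases eq_or_ne x 0 with hx | hx
  · rw [hx, norm_zero]; exact hC
  have hw : nsq ((‖x‖⁻¹ : ℂ) • x).ofLp = 1 := by
    rw [nsq_eq_norm_sq, WithLp.toLp_ofLp, norm_smul, norm_inv, Complex.norm_real, norm_norm,
      inv_mul_cancel₀ (norm_ne_zero_iff.2 hx), one_pow]
  have hdot : star ((‖x‖⁻¹ : ℂ) • x).ofLp ⬝ᵥ A *ᵥ v = ‖x‖ := by
    rw [star_dotProduct_eq_inner, WithLp.toLp_ofLp, inner_smul_left,
      inner_self_eq_norm_sq_to_K, Complex.conj_inv, Complex.conj_ofReal]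
    field_simp [norm_ne_zero_iff.2 hx]
    norm_cast
  simpa only [hdot, Complex.norm_real, norm_norm] using h v _ hv hw

end OperatorNorm

lemma star_dotProduct_conjTranspose_mul_mul_mulVec {m n 𝕜 : Type*} [Fintype m] [Fintype n]
    [RCLike 𝕜] (A : Matrix m n 𝕜) (M : Matrix m m 𝕜) (B : Matrix m n 𝕜) (v w : n → 𝕜) :
    star w ⬝ᵥ (Aᴴ * M * B) *ᵥ v = star (A *ᵥ w) ⬝ᵥ M *ᵥ (B *ᵥ v) := by
  rw [← mulVec_mulVec, ← mulVec_mulVec, dotProduct_mulVec, star_mulVec, dotProduct_mulVec]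

namespace Matrix.IsHermitian

lemma star_dotProduct_mulVec_eq_sum_eigenvalues {n 𝕜 : Type*} [Fintype n] [DecidableEq n]
    [RCLike 𝕜] {M : Matrix n n 𝕜} (hM : M.IsHermitian) (z x : n → 𝕜) :
    star z ⬝ᵥ M *ᵥ x = ∑ k, (hM.eigenvalues k : 𝕜) *
      starRingEnd 𝕜 (star (hM.eigenvectorBasis k).ofLp ⬝ᵥ z) *
      (star (hM.eigenvectorBasis k).ofLp ⬝ᵥ x) := by
  rw [star_dotProduct_eq_inner, ← hM.eigenvectorBasis.sum_inner_mul_inner]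
  refine Finset.sum_congr rfl fun k _ => ?_
  rw [← inner_conj_symm, ← star_dotProduct_eq_inner, ← star_dotProduct_eq_inner]
  set u := (hM.eigenvectorBasis k).ofLp
  have hMu : star u ᵥ* M = star (M *ᵥ u) := by rw [star_mulVec, hM.eq]
  have hMx : star u ⬝ᵥ M *ᵥ x = hM.eigenvalues k * (star u ⬝ᵥ x) := by
    rw [dotProduct_mulVec, hMu, hM.mulVec_eigenvectorBasis, RCLike.real_smul_eq_coe_smul (K := 𝕜),
      star_smul, smul_dotProduct, RCLike.star_def, RCLike.conj_ofReal, smul_eq_mul]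
  rw [hMx]
  ring

end Matrix.IsHermitian

section Spectral

open Finset

variable {d r : ℕ} {M : Matrix (Fin d) (Fin d) ℂ}

lemma nsq_eigenvectorBasis (hM : M.IsHermitian) (k : Fin d) :
    nsq (hM.eigenvectorBasis k).ofLp = 1 := by
  rw [nsq_eq_norm_sq, WithLp.toLp_ofLp, hM.eigenvectorBasis.orthonormal.1 k, one_pow]

lemma abs_eigenvalues_le_opN (hM : M.IsHermitian) (k : Fin d) : |hM.eigenvalues k| ≤ opN M := by
  have h := sqrt_nsq_mulVec_le_opN M (nsq_eigenvectorBasis hM k)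
  rwa [hM.mulVec_eigenvectorBasis, sqrt_nsq, WithLp.toLp_smul, WithLp.toLp_ofLp, norm_smul,
    hM.eigenvectorBasis.orthonormal.1 k, mul_one, Real.norm_eq_abs] at h

lemma sum_abs_eigenvalues_le_rank_mul_opN (hM : M.IsHermitian) (hrank : M.rank = r) :
    ∑ k, |hM.eigenvalues k| ≤ r * opN M := by
  classical
  have hcard : #{k | hM.eigenvalues k ≠ 0} = r := by
    rw [← hrank, hM.rank_eq_card_non_zero_eigs, Fintype.card_subtype]
  calc ∑ k, |hM.eigenvalues k| = ∑ k with hM.eigenvalues k ≠ 0, |hM.eigenvalues k| := by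
        refine (sum_filter_of_ne fun k _ hk => ?_).symm
        simpa using hk
    _ ≤ #{k | hM.eigenvalues k ≠ 0} • opN M :=
        sum_le_card_nsmul _ _ _ fun k _ => abs_eigenvalues_le_opN hM k
    _ = r * opN M := by rw [hcard, nsmul_eq_mul]

end Spectral

section Integration

variable {Ω : Type*} [MeasurableSpace Ω] {μ : Measure Ω} {d : ℕ}

lemma integral_norm_mul_norm_le {E F : Type*} [NormedAddCommGroup E] [NormedAddCommGroup F]
    {f : Ω → E} {g : Ω → F} (hf : MemLp f 2 μ) (hg : MemLp g 2 μ) {c : ℝ}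
    (hfc : ∫ ω, ‖f ω‖ ^ 2 ∂μ ≤ c) (hgc : ∫ ω, ‖g ω‖ ^ 2 ∂μ ≤ c) :
    ∫ ω, ‖f ω‖ * ‖g ω‖ ∂μ ≤ c := by
  have hf2 := hf.norm.integrable_sq
  have hg2 := hg.norm.integrable_sq
  calc ∫ ω, ‖f ω‖ * ‖g ω‖ ∂μ ≤ ∫ ω, (‖f ω‖ ^ 2 + ‖g ω‖ ^ 2) / 2 ∂μ :=
        integral_mono (hf.norm.integrable_mul hg.norm) ((hf2.add hg2).div_const 2) fun ω => by
          nlinarith [sq_nonneg (‖f ω‖ - ‖g ω‖)]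
    _ = ((∫ ω, ‖f ω‖ ^ 2 ∂μ) + ∫ ω, ‖g ω‖ ^ 2 ∂μ) / 2 := by
        rw [integral_div, integral_add hf2 hg2]
    _ ≤ c := by linarith

lemma memLp_star_dotProduct_mulVec {m n 𝕜 : Type*} [Fintype m] [Fintype n] [RCLike 𝕜]
    {p : ENNReal} {Y : Ω → Matrix m n 𝕜} (hY : ∀ i j, MemLp (fun ω => Y ω i j) p μ)
    (v : m → 𝕜) (w : n → 𝕜) : MemLp (fun ω => star v ⬝ᵥ Y ω *ᵥ w) p μ := by
  simp only [dotProduct, mulVec]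
  exact memLp_finsetSum _ fun i _ => (memLp_finsetSum _ fun j _ => (hY i j).mul_const _).const_mul _

lemma integrable_mul_mul_apply {m n 𝕜 : Type*} [Fintype m] [Fintype n] [RCLike 𝕜]
    {Y : Ω → Matrix m n 𝕜} (hY : ∀ i j, MemLp (fun ω => Y ω i j) 2 μ) (M : Matrix n m 𝕜)
    (i : m) (j : n) : Integrable (fun ω => (Y ω * M * Y ω) i j) μ := by
  simp only [mul_apply]
  exact integrable_finsetSum _ fun b _ =>
    (memLp_finsetSum _ fun a _ => (hY i a).mul_const _).integrable_mul (hY b j)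

lemma star_dotProduct_Emat_mulVec {Z : Ω → Matrix (Fin d) (Fin d) ℂ}
    (hZ : ∀ i j, Integrable (fun ω => Z ω i j) μ) (v w : Fin d → ℂ) :
    star w ⬝ᵥ Emat μ Z *ᵥ v = ∫ ω, star w ⬝ᵥ Z ω *ᵥ v ∂μ := by
  simp only [dotProduct, mulVec, Emat, of_apply]
  rw [integral_finsetSum _ fun i _ => ?_]
  · refine Finset.sum_congr rfl fun i _ => ?_
    rw [integral_const_mul, integral_finsetSum _ fun j _ => (hZ i j).mul_const _]
    simp_rw [integral_mul_const]
  · exact (integrable_finsetSum _ fun j _ => (hZ i j).mul_const _).const_mul _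

lemma isHermitian_Emat {X : Ω → Matrix (Fin d) (Fin d) ℂ} (hX : ∀ ω, (X ω).IsHermitian) :
    (Emat μ X).IsHermitian := by
  ext i j
  simp only [conjTranspose_apply, Emat, of_apply, Complex.star_def, ← integral_conj]
  exact integral_congr_ae (.of_forall fun ω => congrFun₂ (hX ω) i j)

lemma sigmaStarSq_nonneg (X : Ω → Matrix (Fin d) (Fin d) ℂ) : 0 ≤ sigmaStarSq μ X :=
  Real.sSup_nonneg fun _ ⟨_, _, _, _, hx⟩ => hx ▸ integral_nonneg fun _ => by positivity

lemma integral_norm_sq_le_sigmaStarSq {X : Ω → Matrix (Fin d) (Fin d) ℂ}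
    (hX : ∀ i j, MemLp (fun ω => (X ω - Emat μ X) i j) 2 μ) {v w : Fin d → ℂ}
    (hv : nsq v = 1) (hw : nsq w = 1) :
    ∫ ω, ‖star v ⬝ᵥ (X ω - Emat μ X) *ᵥ w‖ ^ 2 ∂μ ≤ sigmaStarSq μ X := by
  refine le_csSup ⟨∫ ω, (∑ i, ∑ j, ‖(X ω - Emat μ X) i j‖) ^ 2 ∂μ, ?_⟩ ⟨v, w, hv, hw, rfl⟩
  rintro _ ⟨v, w, hv, hw, rfl⟩
  have hB : MemLp (fun ω => ∑ i, ∑ j, ‖(X ω - Emat μ X) i j‖) 2 μ :=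
    memLp_finsetSum _ fun i _ => memLp_finsetSum _ fun j _ => (hX i j).norm
  exact integral_mono_of_nonneg (.of_forall fun _ => by positivity) hB.integrable_sq
    (.of_forall fun ω => pow_le_pow_left₀ (norm_nonneg _)
      (norm_star_dotProduct_mulVec_le _ hv hw) 2)

lemma norm_integral_star_dotProduct_mul_mul_mulVec_le {Y : Ω → Matrix (Fin d) (Fin d) ℂ}
    (hYherm : ∀ ω, (Y ω).IsHermitian) (hY : ∀ i j, MemLp (fun ω => Y ω i j) 2 μ)
    {M : Matrix (Fin d) (Fin d) ℂ} (hM : M.IsHermitian) {c : ℝ}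
    (hc : ∀ u w, nsq u = 1 → nsq w = 1 → ∫ ω, ‖star u ⬝ᵥ Y ω *ᵥ w‖ ^ 2 ∂μ ≤ c)
    {v w : Fin d → ℂ} (hv : nsq v = 1) (hw : nsq w = 1) :
    ‖∫ ω, star w ⬝ᵥ (Y ω * M * Y ω) *ᵥ v ∂μ‖ ≤ (∑ k, |hM.eigenvalues k|) * c := by
  set u := fun k => (hM.eigenvectorBasis k).ofLp
  have hu k : nsq (u k) = 1 := nsq_eigenvectorBasis hM k
  have hL2 k x : MemLp (fun ω => star (u k) ⬝ᵥ Y ω *ᵥ x) 2 μ :=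
    memLp_star_dotProduct_mulVec hY _ _
  have hint k : Integrable (fun ω =>
      |hM.eigenvalues k| * (‖star (u k) ⬝ᵥ Y ω *ᵥ w‖ * ‖star (u k) ⬝ᵥ Y ω *ᵥ v‖)) μ :=
    ((hL2 k w).norm.integrable_mul (hL2 k v).norm).const_mul _
  have hexpand ω : star w ⬝ᵥ (Y ω * M * Y ω) *ᵥ v = ∑ k, (hM.eigenvalues k : ℂ) *
      starRingEnd ℂ (star (u k) ⬝ᵥ Y ω *ᵥ w) * (star (u k) ⬝ᵥ Y ω *ᵥ v) := by
    have h := star_dotProduct_conjTranspose_mul_mul_mulVec (Y ω) M (Y ω) v w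
    rw [(hYherm ω).eq] at h
    exact h.trans (hM.star_dotProduct_mulVec_eq_sum_eigenvalues _ _)
  calc ‖∫ ω, star w ⬝ᵥ (Y ω * M * Y ω) *ᵥ v ∂μ‖
      ≤ ∫ ω, ∑ k, |hM.eigenvalues k| *
          (‖star (u k) ⬝ᵥ Y ω *ᵥ w‖ * ‖star (u k) ⬝ᵥ Y ω *ᵥ v‖) ∂μ := by
        refine norm_integral_le_of_norm_le (integrable_finsetSum _ fun k _ => hint k)
          (.of_forall fun ω => ?_)
        rw [hexpand]
        refine (norm_sum_le _ _).trans_eq (Finset.sum_congr rfl fun k _ => ?_)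
        rw [norm_mul, norm_mul, Complex.norm_real, Real.norm_eq_abs, RCLike.norm_conj, mul_assoc]
    _ = ∑ k, |hM.eigenvalues k| *
          ∫ ω, ‖star (u k) ⬝ᵥ Y ω *ᵥ w‖ * ‖star (u k) ⬝ᵥ Y ω *ᵥ v‖ ∂μ := by
        rw [integral_finsetSum _ fun k _ => hint k]
        simp_rw [integral_const_mul]
    _ ≤ ∑ k, |hM.eigenvalues k| * c := by
        gcongr with k
        exact integral_norm_mul_norm_le (hL2 k w) (hL2 k v) (hc _ _ (hu k) hw) (hc _ _ (hu k) hv)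
    _ = (∑ k, |hM.eigenvalues k|) * c := by rw [Finset.sum_mul]

end Integration

/-- Lemma: low-rank bound on the quadratic map.
If M is Hermitian of rank r then ‖E[(X - E X) M (X - E X)]‖ ≤ σ*(X)² r ‖M‖. -/
theorem qmap_low_rank_bound {Ω : Type*} [MeasurableSpace Ω] (μ : Measure Ω)
    [IsProbabilityMeasure μ] {d r : ℕ} (X : Ω → Matrix (Fin d) (Fin d) ℂ)
    (hherm : ∀ ω, (X ω).IsHermitian)
    (hL2 : ∀ i j, MemLp (fun ω => X ω i j) 2 μ)
    (M : Matrix (Fin d) (Fin d) ℂ) (hM : M.IsHermitian) (hrank : M.rank = r) :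
    opN (qmap μ X M) ≤ sigmaStarSq μ X * r * opN M := by
  have hY i j : MemLp (fun ω => (X ω - Emat μ X) i j) 2 μ := (hL2 i j).sub (memLp_const _)
  have hσ := sigmaStarSq_nonneg (μ := μ) X
  refine opN_le_of_forall_norm_star_dotProduct_le (by positivity [opN_nonneg M])
    fun v w hv hw => ?_
  rw [qmap, star_dotProduct_Emat_mulVec (integrable_mul_mul_apply hY M)]
  calc _ ≤ (∑ k, |hM.eigenvalues k|) * sigmaStarSq μ X :=
        norm_integral_star_dotProduct_mul_mul_mulVec_le
          (fun ω => (hherm ω).sub (isHermitian_Emat hherm)) hY hM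
          (fun _ _ hu hw => integral_norm_sq_le_sigmaStarSq hY hu hw) hv hw
    _ ≤ r * opN M * sigmaStarSq μ X := by
        gcongr
        exact sum_abs_eigenvalues_le_rank_mul_opN hM hrank
    _ = sigmaStarSq μ X * r * opN M := by ring
end
end

section
/- Let B be a q×q symmetric matrix with strictly positive entries, let c ∈ ℝ^q have strictly positive entries, and let v*_∅ be the unique minimizer (with strictly positive entries) of the infimum defining λ_∅. Then λ = λ_∅ if and only if λ_max(diag(c)^{1/2} B diag(c)^{1/2} − diag(v*_∅)^{-1}) ≤ 0. -/
/-!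
Put `A = B diag(c)` and `g(w) = w⁻¹ + A (w - 1)`, so that `λ_∅ = inf_{w > 0} max_k g_k(w)`.
At the minimiser `v`, first-order optimality (moving along `v - τ h`) forces every `g_k(v)` to
equal `λ_∅`, and by Gordan's alternative there is a positive `t` with `tᵀ A = t / v²`. Then
`∑ t_k g_k(w) = λ_∅ ∑ t_k + ∑ t_k (w_k - v_k)² / (w_k v_k²)`, so the second block can be close
to `λ_∅` only when `w` does not drop far below `v`. With `S = diag(c)^{1/2} B diag(c)^{1/2}` the
first block at `w = v` is `S - diag(v⁻¹) + diag(g(v))`, hence `≤ λ_∅` when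
`λ_max(S - diag(v⁻¹)) ≤ 0`. Conversely, if `λ_max(S - diag(v⁻¹)) > 0`, a unit vector `u` with
`uᵀ(S - diag(v⁻¹))u > 0` keeps the first block uniformly above `λ_∅` as long as `w` does not drop
far below `v`, so `λ > λ_∅`.
-/

open MeasureTheory ProbabilityTheory Matrix

noncomputable section

/-- squared ℓ² norm of a real vector -/
def nsqR {q : ℕ} (v : Fin q → ℝ) : ℝ := ∑ i, v i ^ 2

/-- Rayleigh quotient ⟨v, M v⟩ of a real matrix at a vector -/
def rayR {q : ℕ} (M : Matrix (Fin q) (Fin q) ℝ) (v : Fin q → ℝ) : ℝ := v ⬝ᵥ M.mulVec v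

/-- largest eigenvalue of a real symmetric matrix, characterized as the supremum of the
Rayleigh quotient over ℓ²-unit vectors -/
def lmaxR {q : ℕ} (M : Matrix (Fin q) (Fin q) ℝ) : ℝ :=
  sSup {x | ∃ v, nsqR v = 1 ∧ x = rayR M v}

/-- the quantity λ = inf_{v > 0} max{λ_max(diag(c)^{1/2} B diag(c)^{1/2} +
diag(B diag(c)(v - 1))), λ_max(diag(v)⁻¹ + diag(B diag(c)(v - 1)))} -/
def lamVal {q : ℕ} (B : Matrix (Fin q) (Fin q) ℝ) (c : Fin q → ℝ) : ℝ :=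
  sInf {x | ∃ v : Fin q → ℝ, (∀ k, 0 < v k) ∧
    x = max
      (lmaxR (Matrix.diagonal (fun k => Real.sqrt (c k)) * B *
          Matrix.diagonal (fun k => Real.sqrt (c k)) +
        Matrix.diagonal ((B * Matrix.diagonal c).mulVec (v - 1))))
      (lmaxR (Matrix.diagonal (fun k => (v k)⁻¹) +
        Matrix.diagonal ((B * Matrix.diagonal c).mulVec (v - 1))))}

/-- the quantity λ_∅ = inf_{v > 0} λ_max(diag(v)⁻¹ + diag(B diag(c)(v - 1))) -/
def lamNull {q : ℕ} (B : Matrix (Fin q) (Fin q) ℝ) (c : Fin q → ℝ) : ℝ :=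
  sInf {x | ∃ v : Fin q → ℝ, (∀ k, 0 < v k) ∧
    x = lmaxR (Matrix.diagonal (fun k => (v k)⁻¹) +
      Matrix.diagonal ((B * Matrix.diagonal c).mulVec (v - 1)))}

open Filter Topology

section Rayleigh

variable {q : ℕ}

lemma rayR_add (M N : Matrix (Fin q) (Fin q) ℝ) (u : Fin q → ℝ) :
    rayR (M + N) u = rayR M u + rayR N u := by
  simp only [rayR, add_mulVec, dotProduct_add]

lemma rayR_sub (M N : Matrix (Fin q) (Fin q) ℝ) (u : Fin q → ℝ) :
    rayR (M - N) u = rayR M u - rayR N u := by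
  simp only [rayR, sub_mulVec, dotProduct_sub]

lemma rayR_diagonal (d u : Fin q → ℝ) : rayR (diagonal d) u = ∑ k, d k * u k ^ 2 := by
  simp only [rayR, dotProduct, mulVec_diagonal]
  exact Finset.sum_congr rfl fun k _ => by ring

lemma nsqR_single (k : Fin q) : nsqR (Pi.single k 1 : Fin q → ℝ) = 1 := by
  simp [nsqR, Pi.single_apply]

lemma abs_le_one_of_nsqR_eq_one {u : Fin q → ℝ} (hu : nsqR u = 1) (i : Fin q) : |u i| ≤ 1 := by
  rw [← sq_le_one_iff_abs_le_one, ← hu]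
  exact Finset.single_le_sum (f := fun j => u j ^ 2) (fun j _ => sq_nonneg _) (Finset.mem_univ i)

lemma rayR_le_sum_abs (M : Matrix (Fin q) (Fin q) ℝ) {u : Fin q → ℝ} (hu : nsqR u = 1) :
    rayR M u ≤ ∑ i, ∑ j, |M i j| := by
  simp only [rayR, dotProduct, mulVec, Finset.mul_sum]
  refine Finset.sum_le_sum fun i _ => Finset.sum_le_sum fun j _ => ?_
  calc u i * (M i j * u j) ≤ |u i| * (|M i j| * |u j|) := by
        rw [← abs_mul, ← abs_mul]; exact le_abs_self _
    _ ≤ 1 * (|M i j| * 1) := by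
        gcongr
        exacts [abs_le_one_of_nsqR_eq_one hu i, abs_le_one_of_nsqR_eq_one hu j]
    _ = |M i j| := by ring

lemma bddAbove_rayR (M : Matrix (Fin q) (Fin q) ℝ) :
    BddAbove {x | ∃ u, nsqR u = 1 ∧ x = rayR M u} :=
  ⟨∑ i, ∑ j, |M i j|, by rintro x ⟨u, hu, rfl⟩; exact rayR_le_sum_abs M hu⟩

lemma rayR_le_lmaxR (M : Matrix (Fin q) (Fin q) ℝ) {u : Fin q → ℝ} (hu : nsqR u = 1) :
    rayR M u ≤ lmaxR M :=
  le_csSup (bddAbove_rayR M) ⟨u, hu, rfl⟩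

lemma lmaxR_le (hq : 0 < q) {M : Matrix (Fin q) (Fin q) ℝ} {b : ℝ}
    (h : ∀ u, nsqR u = 1 → rayR M u ≤ b) : lmaxR M ≤ b :=
  csSup_le ⟨_, _, nsqR_single ⟨0, hq⟩, rfl⟩ (by rintro x ⟨u, hu, rfl⟩; exact h u hu)

lemma exists_rayR_pos {M : Matrix (Fin q) (Fin q) ℝ} (hM : 0 < lmaxR M) :
    ∃ u, nsqR u = 1 ∧ 0 < rayR M u := by
  by_contra! h
  exact hM.not_ge (Real.sSup_nonpos (by rintro x ⟨u, hu, rfl⟩; exact h u hu))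

lemma lmaxR_add_le (hq : 0 < q) (M N : Matrix (Fin q) (Fin q) ℝ) :
    lmaxR (M + N) ≤ lmaxR M + lmaxR N :=
  lmaxR_le hq fun u hu => (rayR_add M N u).trans_le <|
    add_le_add (rayR_le_lmaxR M hu) (rayR_le_lmaxR N hu)

lemma le_lmaxR_diagonal (d : Fin q → ℝ) (k : Fin q) : d k ≤ lmaxR (diagonal d) := by
  have := rayR_le_lmaxR (diagonal d) (nsqR_single k)
  simpa [rayR_diagonal, Pi.single_apply] using this

lemma exists_le_of_le_lmaxR_diagonal (hq : 0 < q) {d : Fin q → ℝ} {b : ℝ}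
    (h : b ≤ lmaxR (diagonal d)) : ∃ k, b ≤ d k := by
  have : Nonempty (Fin q) := ⟨⟨0, hq⟩⟩
  obtain ⟨k, hk⟩ := Finite.exists_max d
  refine ⟨k, h.trans (lmaxR_le hq fun u hu => ?_)⟩
  calc rayR (diagonal d) u = ∑ j, d j * u j ^ 2 := rayR_diagonal d u
    _ ≤ ∑ j, d k * u j ^ 2 := by gcongr with j; exact hk j
    _ = d k := by rw [← Finset.mul_sum, show ∑ j, u j ^ 2 = nsqR u from rfl, hu, mul_one]

lemma sum_mul_le_mul_lmaxR_diagonal {t : Fin q → ℝ} (ht : ∀ k, 0 ≤ t k) (d : Fin q → ℝ) :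
    ∑ k, t k * d k ≤ (∑ k, t k) * lmaxR (diagonal d) := by
  rw [Finset.sum_mul]
  exact Finset.sum_le_sum fun k _ => mul_le_mul_of_nonneg_left (le_lmaxR_diagonal d k) (ht k)

end Rayleigh

theorem HasDerivAt.eventually_nhdsGT_lt {f : ℝ → ℝ} {f' x : ℝ} (hf : HasDerivAt f f' x)
    (hf' : f' < 0) : ∀ᶠ y in 𝓝[>] x, f y < f x := by
  have hslope := hasDerivWithinAt_iff_tendsto_slope.1 (hf.hasDerivWithinAt (s := Set.Ioi x))
  rw [Set.sdiff_singleton_eq_self Set.self_notMem_Ioi] at hslope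
  filter_upwards [hslope.eventually (eventually_lt_nhds hf'), self_mem_nhdsWithin] with y hy hxy
  rw [slope_def_field] at hy
  exact sub_neg.1 (neg_of_div_neg_left hy (sub_nonneg.2 (le_of_lt hxy)))

theorem exists_nonneg_vecMul_eq_zero_of_not_exists_mulVec_pos {m n : Type*} [Fintype m]
    [Fintype n] (M : Matrix m n ℝ) (h : ¬ ∃ x, ∀ i, 0 < (M *ᵥ x) i) :
    ∃ s : m → ℝ, (∀ i, 0 ≤ s i) ∧ s ≠ 0 ∧ s ᵥ* M = 0 := by
  classical
  set P : Set (m → ℝ) := Set.univ.pi fun _ => Set.Ioi 0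
  have hdisj : Disjoint P (LinearMap.range M.mulVecLin : Set (m → ℝ)) := by
    rw [Set.disjoint_left]
    rintro _ hy ⟨x, rfl⟩
    exact h ⟨x, fun i => hy i (Set.mem_univ i)⟩
  obtain ⟨f, u, hfP, hfV⟩ := geometric_hahn_banach_open (convex_pi fun _ _ => convex_Ioi 0)
    (isOpen_set_pi Set.finite_univ fun _ _ => isOpen_Ioi) (Submodule.convex _) hdisj
  have hu : u ≤ 0 := by simpa using hfV 0 (Submodule.zero_mem _)
  have hfV0 : ∀ x, f (M *ᵥ x) = 0 := by
    intro x
    by_contra hx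
    have := hfV (((u - 1) / f (M *ᵥ x)) • M *ᵥ x) (Submodule.smul_mem _ _ ⟨x, rfl⟩)
    rw [map_smul, smul_eq_mul, div_mul_cancel₀ _ hx] at this
    linarith
  set s : m → ℝ := fun i => -f fun j => if i = j then 1 else 0
  have hf : ∀ y, f y = -(s ⬝ᵥ y) := fun y => by
    have := (f : (m → ℝ) →ₗ[ℝ] ℝ).pi_apply_eq_sum_univ y
    rw [ContinuousLinearMap.coe_coe] at this
    rw [this, dotProduct, ← Finset.sum_neg_distrib]
    exact Finset.sum_congr rfl fun i _ => by simp [s, mul_comm]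
  have hpos : ∀ y ∈ P, 0 < s ⬝ᵥ y := fun y hy => by linarith [hf y, hfP y hy]
  refine ⟨s, fun i => ?_, fun hs => ?_, ?_⟩
  · have hlim : Tendsto (fun ε : ℝ => s i + ε * (s ⬝ᵥ 1)) (𝓝[>] 0) (𝓝 (s i)) :=
      tendsto_nhdsWithin_of_tendsto_nhds <|
        (by fun_prop : Continuous fun ε : ℝ => s i + ε * (s ⬝ᵥ 1)).tendsto' 0 _ (by simp)
    refine ge_of_tendsto hlim (eventually_nhdsWithin_of_forall fun ε hε => ?_)
    have hmem : Pi.single i 1 + ε • 1 ∈ P := fun j _ => by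
      have : (0 : ℝ) ≤ (Pi.single i 1 : m → ℝ) j := by by_cases hij : j = i <;> simp [hij]
      simp only [Pi.add_apply, Pi.smul_apply, Pi.one_apply, smul_eq_mul, mul_one, Set.mem_Ioi]
      linarith [Set.mem_Ioi.1 hε]
    simpa [dotProduct_add, dotProduct_smul] using (hpos _ hmem).le
  · simpa [hs] using hpos 1 fun _ _ => Set.mem_Ioi.2 one_pos
  · refine dotProduct_self_eq_zero.1 ?_
    rw [← dotProduct_mulVec, ← neg_eq_zero, ← hf, hfV0]

def nullDiag {ι : Type*} [Fintype ι] (A : Matrix ι ι ℝ) (w : ι → ℝ) : ι → ℝ :=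
  fun k => (w k)⁻¹ + (A *ᵥ (w - 1)) k

def IsNullLowerBound {ι : Type*} [Fintype ι] (A : Matrix ι ι ℝ) (μ : ℝ) : Prop :=
  ∀ w : ι → ℝ, (∀ k, 0 < w k) → ∃ k, μ ≤ nullDiag A w k

section NullDiag

variable {ι : Type*} [Fintype ι] {A : Matrix ι ι ℝ} {t v w : ι → ℝ} {μ : ℝ}

lemma diagonal_inv_add_diagonal_mulVec [DecidableEq ι] (A : Matrix ι ι ℝ) (w : ι → ℝ) :
    diagonal (fun k => (w k)⁻¹) + diagonal (A *ᵥ (w - 1)) = diagonal (nullDiag A w) :=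
  diagonal_add _ _

lemma neg_sum_lt_nullDiag (hA : ∀ k l, 0 ≤ A k l) (hw : ∀ k, 0 < w k) (k : ι) :
    -∑ l, A k l < nullDiag A w k := by
  have hmulVec : (A *ᵥ (w - 1)) k = ∑ l, A k l * w l - ∑ l, A k l := by
    simp [mulVec, dotProduct, mul_sub, Finset.sum_sub_distrib]
  have hsum : 0 ≤ ∑ l, A k l * w l := Finset.sum_nonneg fun l _ => mul_nonneg (hA k l) (hw l).le
  have hinv := inv_pos.2 (hw k)
  simp only [nullDiag, hmulVec]
  linarith

lemma nullDiag_eq_add (A : Matrix ι ι ℝ) (v w : ι → ℝ) (k : ι) :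
    nullDiag A w k = nullDiag A v k + ((w k)⁻¹ - (v k)⁻¹) + (A *ᵥ (w - v)) k := by
  have : w - v = (w - 1) - (v - 1) := by abel
  simp only [nullDiag, this, mulVec_sub, Pi.sub_apply]
  ring

lemma hasDerivAt_nullDiag_sub_smul (A : Matrix ι ι ℝ) (h : ι → ℝ) {k : ι} (hv : v k ≠ 0) :
    HasDerivAt (fun τ : ℝ => nullDiag A (v - τ • h) k) (h k / v k ^ 2 - (A *ᵥ h) k) 0 := by
  have hform : (fun τ : ℝ => nullDiag A (v - τ • h) k) =
      fun τ => (v k - τ * h k)⁻¹ + ((A *ᵥ (v - 1)) k - τ * (A *ᵥ h) k) := by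
    funext τ
    have : v - τ • h - 1 = (v - 1) - τ • h := by abel
    simp [nullDiag, this, mulVec_sub, mulVec_smul]
  have hlin : ∀ a b : ℝ, HasDerivAt (fun τ : ℝ => a - τ * b) (-b) 0 := fun a b => by
    simpa using ((hasDerivAt_id (0 : ℝ)).mul_const b).const_sub a
  rw [hform]
  refine (((hlin (v k) (h k)).inv (by simpa using hv)).add
    (hlin ((A *ᵥ (v - 1)) k) ((A *ᵥ h) k))).congr_deriv ?_
  simp only [zero_mul, sub_zero, neg_neg]
  ring

lemma exists_pos_forall_nullDiag_lt (hv : ∀ k, 0 < v k) (hle : ∀ k, nullDiag A v k ≤ μ)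
    {h : ι → ℝ} (hdesc : ∀ k, nullDiag A v k < μ ∨ h k / v k ^ 2 < (A *ᵥ h) k) :
    ∃ w, (∀ k, 0 < w k) ∧ ∀ k, nullDiag A w k < μ := by
  -- along `v - τ • h`, slack coordinates stay below `μ` by continuity and the others decrease
  -- to first order
  have heventually : ∀ k, ∀ᶠ τ in 𝓝[>] (0 : ℝ),
      0 < (v - τ • h) k ∧ nullDiag A (v - τ • h) k < μ := by
    intro k
    have hd := hasDerivAt_nullDiag_sub_smul A h (hv k).ne'
    have hpos : Tendsto (fun τ : ℝ => (v - τ • h) k) (𝓝[>] 0) (𝓝 (v k)) :=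
      tendsto_nhdsWithin_of_tendsto_nhds <|
        (by fun_prop : Continuous fun τ : ℝ => v k - τ * h k).tendsto' 0 _ (by simp)
    refine (hpos.eventually_const_lt (hv k)).and ?_
    rcases hdesc k with hlt | hdir
    · exact (hd.continuousAt.tendsto.mono_left nhdsWithin_le_nhds).eventually_lt_const
        (by simpa using hlt)
    · filter_upwards [hd.eventually_nhdsGT_lt (sub_neg.2 hdir)] with τ hτ
      exact hτ.trans_le (by simpa using hle k)
  obtain ⟨τ, hτ⟩ := (eventually_all.2 heventually).exists
  exact ⟨v - τ • h, fun k => (hτ k).1, fun k => (hτ k).2⟩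

theorem IsNullLowerBound.nullDiag_eq (hμ : IsNullLowerBound A μ) (hA : ∀ k l, 0 < A k l)
    (hv : ∀ k, 0 < v k) (hle : ∀ k, nullDiag A v k ≤ μ) (j : ι) : nullDiag A v j = μ := by
  classical
  -- lowering `v j` alone lowers every other coordinate, so slack at `j` would allow a strict
  -- improvement
  refine (hle j).antisymm (not_lt.1 fun hj => ?_)
  obtain ⟨w, hw, hlt⟩ := exists_pos_forall_nullDiag_lt hv hle (h := Pi.single j 1) fun k => by
    by_cases hkj : k = j
    · exact .inl (hkj ▸ hj)
    · exact .inr (by simpa [hkj, mulVec_single_one] using hA k j)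
  obtain ⟨k, hk⟩ := hμ w hw
  exact (hlt k).not_ge hk

theorem IsNullLowerBound.exists_pos_vecMul_eq (hμ : IsNullLowerBound A μ)
    (hA : ∀ k l, 0 < A k l) (hv : ∀ k, 0 < v k) (hactive : ∀ k, nullDiag A v k = μ) :
    ∃ t : ι → ℝ, (∀ k, 0 < t k) ∧ t ᵥ* A = fun k => t k / v k ^ 2 := by
  classical
  obtain ⟨s, hs0, hs, hsM⟩ := exists_nonneg_vecMul_eq_zero_of_not_exists_mulVec_pos
    (A - diagonal fun k => (v k ^ 2)⁻¹) <| by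
      rintro ⟨h, hh⟩
      obtain ⟨w, hw, hlt⟩ := exists_pos_forall_nullDiag_lt hv (fun k => (hactive k).le)
        (h := h) fun k => .inr (by simpa [sub_mulVec, mulVec_diagonal, div_eq_inv_mul] using hh k)
      obtain ⟨k, hk⟩ := hμ w hw
      exact (hlt k).not_ge hk
  have heig : s ᵥ* A = fun k => s k / v k ^ 2 := by
    rw [vecMul_sub, sub_eq_zero] at hsM
    rw [hsM]
    ext k
    simp [vecMul_diagonal, div_eq_mul_inv]
  obtain ⟨i, hi⟩ := Function.ne_iff.1 hs
  refine ⟨s, fun j => ?_, heig⟩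
  have : 0 < s j / v j ^ 2 := by
    rw [← congrFun heig j]
    exact Finset.sum_pos' (fun k _ => mul_nonneg (hs0 k) (hA k j).le)
      ⟨i, Finset.mem_univ _, mul_pos ((hs0 i).lt_of_ne' hi) (hA i j)⟩
  exact (div_pos_iff_of_pos_right (pow_pos (hv j) 2)).1 this

lemma sum_mul_nullDiag_eq (hv : ∀ k, 0 < v k) (hw : ∀ k, 0 < w k)
    (hactive : ∀ k, nullDiag A v k = μ) (heig : t ᵥ* A = fun k => t k / v k ^ 2) :
    ∑ k, t k * nullDiag A w k =
      (∑ k, t k) * μ + ∑ k, t k * (w k - v k) ^ 2 / (w k * v k ^ 2) := by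
  have hcoupling : ∑ k, t k * (A *ᵥ (w - v)) k = ∑ k, t k / v k ^ 2 * (w k - v k) := by
    rw [← dotProduct, dotProduct_mulVec, heig]
    rfl
  calc ∑ k, t k * nullDiag A w k
      = ∑ k, (t k * μ + t k * ((w k)⁻¹ - (v k)⁻¹)) + ∑ k, t k * (A *ᵥ (w - v)) k := by
        simp only [nullDiag_eq_add A v w, hactive, mul_add, Finset.sum_add_distrib]
    _ = ∑ k, (t k * μ + (t k * ((w k)⁻¹ - (v k)⁻¹) + t k / v k ^ 2 * (w k - v k))) := by
        rw [hcoupling, ← Finset.sum_add_distrib]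
        simp only [add_assoc]
    _ = ∑ k, (t k * μ + t k * (w k - v k) ^ 2 / (w k * v k ^ 2)) := by
        refine Finset.sum_congr rfl fun k _ => ?_
        have := (hv k).ne'
        have := (hw k).ne'
        field_simp
        ring
    _ = _ := by rw [Finset.sum_add_distrib, Finset.sum_mul]

end NullDiag

lemma exists_forall_sub_le_or_le_sum {ι : Type*} [Fintype ι] [Nonempty ι] {t v : ι → ℝ}
    (ht : ∀ k, 0 < t k) (hv : ∀ k, 0 < v k) {η : ℝ} (hη : 0 < η) :
    ∃ δ > 0, ∀ w : ι → ℝ, (∀ k, 0 < w k) →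
      (∀ k, v k - η ≤ w k) ∨ δ ≤ ∑ k, t k * (w k - v k) ^ 2 / (w k * v k ^ 2) := by
  obtain ⟨k₀, hk₀⟩ := Finite.exists_min fun k => t k * η ^ 2 / v k ^ 3
  have := ht k₀
  have := hv k₀
  refine ⟨t k₀ * η ^ 2 / v k₀ ^ 3, by positivity,
    fun w hw => or_iff_not_imp_left.2 fun hfar => ?_⟩
  obtain ⟨k, hk⟩ := not_forall.1 hfar
  have hwk := hw k
  have hvk := hv k
  have htk := ht k
  calc t k₀ * η ^ 2 / v k₀ ^ 3 ≤ t k * η ^ 2 / v k ^ 3 := hk₀ k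
    _ ≤ t k * (w k - v k) ^ 2 / v k ^ 3 :=
        div_le_div_of_nonneg_right (mul_le_mul_of_nonneg_left (by nlinarith) htk.le)
          (by positivity)
    _ ≤ t k * (w k - v k) ^ 2 / (w k * v k ^ 2) := by gcongr; nlinarith
    _ ≤ ∑ k, t k * (w k - v k) ^ 2 / (w k * v k ^ 2) :=
        Finset.single_le_sum (f := fun k => t k * (w k - v k) ^ 2 / (w k * v k ^ 2))
          (fun j _ => by have := ht j; have := hw j; positivity) (Finset.mem_univ k)

section Blocks

variable {q : ℕ} {A S : Matrix (Fin q) (Fin q) ℝ} {t u v w : Fin q → ℝ} {μ : ℝ}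

lemma rayR_sub_diagonal_inv_add_le_lmaxR (hu : nsqR u = 1) (hactive : ∀ k, nullDiag A v k = μ) :
    rayR (S - diagonal fun k => (v k)⁻¹) u + μ + (u ^ 2 ᵥ* A) ⬝ᵥ (w - v) ≤
      lmaxR (S + diagonal (A *ᵥ (w - 1))) := by
  refine le_of_eq_of_le ?_ (rayR_le_lmaxR _ hu)
  have hdiag : ∀ k, (A *ᵥ (w - 1)) k = μ - (v k)⁻¹ + (A *ᵥ (w - v)) k := fun k => by
    have : w - 1 = (v - 1) + (w - v) := by abel
    rw [← hactive k, this, mulVec_add]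
    simp only [nullDiag, Pi.add_apply]
    ring
  have hu' : ∑ k, u k ^ 2 = 1 := hu
  rw [rayR_sub, rayR_add, rayR_diagonal, rayR_diagonal, ← dotProduct_mulVec, dotProduct_comm]
  simp only [hdiag, dotProduct, Pi.pow_apply, add_mul, sub_mul, Finset.sum_add_distrib,
    Finset.sum_sub_distrib, ← Finset.mul_sum, hu', mul_one]
  ring

lemma lmaxR_add_diagonal_mulVec_le (hq : 0 < q) (S A : Matrix (Fin q) (Fin q) ℝ)
    (v : Fin q → ℝ) :
    lmaxR (S + diagonal (A *ᵥ (v - 1))) ≤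
      lmaxR (S - diagonal fun k => (v k)⁻¹) + lmaxR (diagonal (nullDiag A v)) := by
  have : S + diagonal (A *ᵥ (v - 1)) = (S - diagonal fun k => (v k)⁻¹) +
      (diagonal (fun k => (v k)⁻¹) + diagonal (A *ᵥ (v - 1))) := by abel
  rw [this, diagonal_inv_add_diagonal_mulVec]
  exact lmaxR_add_le hq _ _

theorem exists_pos_add_le_max (hq : 0 < q) (hA : ∀ k l, 0 ≤ A k l) (hv : ∀ k, 0 < v k)
    (hactive : ∀ k, nullDiag A v k = μ) (ht : ∀ k, 0 < t k)
    (heig : t ᵥ* A = fun k => t k / v k ^ 2) (hS : 0 < lmaxR (S - diagonal fun k => (v k)⁻¹)) :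
    ∃ κ > 0, ∀ w : Fin q → ℝ, (∀ k, 0 < w k) →
      μ + κ ≤ max (lmaxR (S + diagonal (A *ᵥ (w - 1)))) (lmaxR (diagonal (nullDiag A w))) := by
  have : Nonempty (Fin q) := ⟨⟨0, hq⟩⟩
  obtain ⟨u, hu, hε⟩ := exists_rayR_pos hS
  set ε := rayR (S - diagonal fun k => (v k)⁻¹) u
  set γ := u ^ 2 ᵥ* A
  have hγ : ∀ l, 0 ≤ γ l := fun l => by
    simp only [γ, vecMul, dotProduct, Pi.pow_apply]
    exact Finset.sum_nonneg fun k _ => mul_nonneg (pow_two_nonneg (u k)) (hA k l)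
  have hΓ : 0 ≤ ∑ l, γ l := Finset.sum_nonneg fun l _ => hγ l
  set η := ε / (2 * (∑ l, γ l + 1))
  have hηγ : η * ∑ l, γ l ≤ ε / 2 := by
    rw [div_mul_eq_mul_div, div_le_div_iff₀ (by positivity) two_pos]
    nlinarith
  obtain ⟨δ, hδ, hcontrol⟩ := exists_forall_sub_le_or_le_sum ht hv (by positivity : 0 < η)
  have hT : 0 < ∑ k, t k := Finset.sum_pos (fun k _ => ht k) Finset.univ_nonempty
  refine ⟨min (ε / 2) (δ / ∑ k, t k), lt_min (half_pos hε) (div_pos hδ hT), fun w hw => ?_⟩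
  -- either `w` stays above `v - η` and `u` keeps the first block high, or the identity
  -- `sum_mul_nullDiag_eq` keeps the second one high
  rcases hcontrol w hw with hclose | hfar
  · have hlin : -(η * ∑ l, γ l) ≤ γ ⬝ᵥ (w - v) := by
      rw [dotProduct, Finset.mul_sum, ← Finset.sum_neg_distrib]
      exact Finset.sum_le_sum fun l _ => by
        simp only [Pi.sub_apply]
        nlinarith [hγ l, hclose l]
    calc μ + min (ε / 2) (δ / ∑ k, t k) ≤ ε + μ - η * ∑ l, γ l := by
          linarith [min_le_left (ε / 2) (δ / ∑ k, t k)]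
      _ ≤ lmaxR (S + diagonal (A *ᵥ (w - 1))) := by
          linarith [rayR_sub_diagonal_inv_add_le_lmaxR (S := S) (w := w) hu hactive]
      _ ≤ _ := le_max_left _ _
  · have hweighted := sum_mul_le_mul_lmaxR_diagonal (fun k => (ht k).le) (nullDiag A w)
    rw [sum_mul_nullDiag_eq hv hw hactive heig] at hweighted
    have : δ / ∑ k, t k ≤ lmaxR (diagonal (nullDiag A w)) - μ := by
      rw [div_le_iff₀ hT]
      linarith
    calc μ + min (ε / 2) (δ / ∑ k, t k) ≤ lmaxR (diagonal (nullDiag A w)) := by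
          linarith [min_le_right (ε / 2) (δ / ∑ k, t k)]
      _ ≤ _ := le_max_right _ _

end Blocks

section InfOverPositive

variable {ι : Type*} {f : (ι → ℝ) → ℝ} {a : ℝ}

lemma le_sInf_of_forall_pos (h : ∀ w, (∀ k, 0 < w k) → a ≤ f w) :
    a ≤ sInf {x | ∃ w : ι → ℝ, (∀ k, 0 < w k) ∧ x = f w} :=
  le_csInf ⟨f 1, 1, fun _ => one_pos, rfl⟩ (by rintro x ⟨w, hw, rfl⟩; exact h w hw)

lemma sInf_le_of_forall_pos (h : ∀ w, (∀ k, 0 < w k) → a ≤ f w) {w : ι → ℝ}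
    (hw : ∀ k, 0 < w k) : sInf {x | ∃ w : ι → ℝ, (∀ k, 0 < w k) ∧ x = f w} ≤ f w :=
  csInf_le ⟨a, by rintro x ⟨w, hw, rfl⟩; exact h w hw⟩ ⟨w, hw, rfl⟩

end InfOverPositive

theorem phase_region_characterization_general {q : ℕ} (hq : 0 < q)
    (B : Matrix (Fin q) (Fin q) ℝ) (hBpos : ∀ k l, 0 < B k l)
    (c : Fin q → ℝ) (hc : ∀ k, 0 < c k)
    (v : Fin q → ℝ) (hv : ∀ k, 0 < v k)
    (hmin : lmaxR (Matrix.diagonal (fun k => (v k)⁻¹) +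
      Matrix.diagonal ((B * Matrix.diagonal c).mulVec (v - 1))) = lamNull B c) :
    lamVal B c = lamNull B c ↔
      lmaxR (Matrix.diagonal (fun k => Real.sqrt (c k)) * B *
          Matrix.diagonal (fun k => Real.sqrt (c k)) -
        Matrix.diagonal (fun k => (v k)⁻¹)) ≤ 0 := by
  simp only [lamNull, lamVal, diagonal_inv_add_diagonal_mulVec] at hmin ⊢
  set A := B * diagonal c
  have hA : ∀ k l, 0 < A k l := fun k l => by
    simpa [A, mul_diagonal] using mul_pos (hBpos k l) (hc l)
  set S := diagonal (fun k => √(c k)) * B * diagonal fun k => √(c k)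
  set μ := sInf {x | ∃ w : Fin q → ℝ, (∀ k, 0 < w k) ∧ x = lmaxR (diagonal (nullDiag A w))}
  have hnull : ∀ w, (∀ k, 0 < w k) → μ ≤ lmaxR (diagonal (nullDiag A w)) :=
    fun w => sInf_le_of_forall_pos fun w hw =>
      (neg_sum_lt_nullDiag (hA · · |>.le) hw ⟨0, hq⟩).le.trans (le_lmaxR_diagonal _ _)
  have hμ : IsNullLowerBound A μ := fun w hw => exists_le_of_le_lmaxR_diagonal hq (hnull w hw)
  have hactive := hμ.nullDiag_eq hA hv fun k => hmin ▸ le_lmaxR_diagonal _ k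
  obtain ⟨t, ht, heig⟩ := hμ.exists_pos_vecMul_eq hA hv hactive
  have hblock : ∀ w, (∀ k, 0 < w k) → μ ≤
      max (lmaxR (S + diagonal (A *ᵥ (w - 1)))) (lmaxR (diagonal (nullDiag A w))) :=
    fun w hw => (hnull w hw).trans (le_max_right _ _)
  constructor
  · intro heq
    by_contra! hS
    obtain ⟨κ, hκ, hgap⟩ := exists_pos_add_le_max hq (hA · · |>.le) hv hactive ht heig hS
    linarith [le_sInf_of_forall_pos hgap]
  · intro hS
    refine le_antisymm ((sInf_le_of_forall_pos hblock hv).trans (max_le ?_ hmin.le))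
      (le_sInf_of_forall_pos hblock)
    linarith [lmaxR_add_diagonal_mulVec_le hq S A v]

/-- Lemma: characterization of the phase region λ = λ_∅ in terms of the
minimizer v*_∅ of the variational problem defining λ_∅. -/
theorem phase_region_characterization {q : ℕ} (hq : 0 < q)
    (B : Matrix (Fin q) (Fin q) ℝ) (hBsym : B.IsSymm) (hBpos : ∀ k l, 0 < B k l)
    (c : Fin q → ℝ) (hc : ∀ k, 0 < c k)
    (v : Fin q → ℝ) (hv : ∀ k, 0 < v k)
    (hmin : lmaxR (Matrix.diagonal (fun k => (v k)⁻¹) +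
      Matrix.diagonal ((B * Matrix.diagonal c).mulVec (v - 1))) = lamNull B c) :
    lamVal B c = lamNull B c ↔
      lmaxR (Matrix.diagonal (fun k => Real.sqrt (c k)) * B *
          Matrix.diagonal (fun k => Real.sqrt (c k)) -
        Matrix.diagonal (fun k => (v k)⁻¹)) ≤ 0 :=
  phase_region_characterization_general hq B hBpos c hc v hv hmin
end
end
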